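/- For every nonzero real number a and every (x,y) ∈ ℝ², the map L̃ of Theorem 6.1 satisfies b(L̃(x,y), ∂L̃/∂x(x,y)) = 0 and b(L̃(x,y), ∂L̃/∂y(x,y)) = 0 (as complex numbers); that is, L̃ is a horizontal map with respect to the Hopf fibration π : S⁵₂(1) → CP²₁(4). -/

import Mathlib

open Complex

/-- The index-one Hermitian form `b(z,w) = −conj z₁ · w₁ + conj z₂ · w₂ + conj z₃ · w₃`
on `ℂ³`, over which the pseudo-sphere `S⁵₂(1) = {z : b(z,z) = 1}` and the Hopf
fibration `π : S⁵₂(1) → CP²₁(4)` are defined. -/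
noncomputable def bSph (z w : ℂ × ℂ × ℂ) : ℂ :=
  -(starRingEnd ℂ z.1) * w.1 + (starRingEnd ℂ z.2.1) * w.2.1
    + (starRingEnd ℂ z.2.2) * w.2.2

/-- The horizontal lift `L̃ : ℝ² → ℂ³` of Theorem 6.1 (the timelike first
coordinate carries the `sinh` factor). -/
noncomputable def Lcp (a x y : ℝ) : ℂ × ℂ × ℂ :=
  ((1 / Real.sqrt 3 : ℝ) : ℂ) •
    (((Real.sqrt 2 : ℝ) : ℂ) * Complex.exp (Complex.I * ((x - a ^ 2 * y : ℝ) : ℂ) / (2 * (a : ℂ)))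
        * ((Real.sinh (Real.sqrt 3 * (x + a ^ 2 * y) / (2 * a)) : ℝ) : ℂ),
     Complex.exp (Complex.I * ((a ^ 2 * y - x : ℝ) : ℂ) / (a : ℂ)),
     ((Real.sqrt 2 : ℝ) : ℂ) * Complex.exp (Complex.I * ((x - a ^ 2 * y : ℝ) : ℂ) / (2 * (a : ℂ)))
        * ((Real.cosh (Real.sqrt 3 * (x + a ^ 2 * y) / (2 * a)) : ℝ) : ℂ))

/-! Along a coordinate line `L̃` has the shape
`(1/√3) (√2 e^{iα} sinh φ, e^{iβ}, √2 e^{iα} cosh φ)` with affine `α, β, φ`.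
In `b(L̃, L̃')` the `φ'`-terms cancel and `cosh² φ - sinh² φ = 1` leaves
`b(L̃, L̃') = (i/3)(2α' + β')`; along both lines the phases satisfy `2α' + β' = 0`. -/

open ComplexConjugate

noncomputable def hopfPoint (c r α β φ : ℝ) : ℂ × ℂ × ℂ :=
  (c : ℂ) • ((r : ℂ) * exp (α * I) * (Real.sinh φ : ℂ), exp (β * I),
    (r : ℂ) * exp (α * I) * (Real.cosh φ : ℂ))

lemma Lcp_eq_hopfPoint (a x y : ℝ) :
    Lcp a x y = hopfPoint (1 / √3) √2 ((x - a ^ 2 * y) / (2 * a)) ((a ^ 2 * y - x) / a)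
      (√3 * (x + a ^ 2 * y) / (2 * a)) := by
  simp only [Lcp, hopfPoint]
  push_cast
  ring_nf

lemma conj_exp_ofReal_mul_I_mul_self (θ : ℝ) : conj (exp (θ * I)) * exp (θ * I) = 1 := by
  rw [← exp_conj, ← exp_add, map_mul, conj_ofReal, conj_I]
  simp

section

variable {α β φ : ℝ → ℝ} {α' β' φ' t : ℝ}

lemma hasDerivAt_cexp_ofReal_mul_I (hα : HasDerivAt α α' t) :
    HasDerivAt (fun s => exp (α s * I)) (exp (α t * I) * (α' * I)) t :=
  (hα.ofReal_comp.mul_const I).cexp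

lemma hasDerivAt_hopfPoint (c r : ℝ) (hα : HasDerivAt α α' t) (hβ : HasDerivAt β β' t)
    (hφ : HasDerivAt φ φ' t) :
    HasDerivAt (fun s => hopfPoint c r (α s) (β s) (φ s))
      ((c : ℂ) • ((r : ℂ) * (exp (α t * I) * (α' * I)) * (Real.sinh (φ t) : ℂ)
          + (r : ℂ) * exp (α t * I) * ((Real.cosh (φ t) * φ' : ℝ) : ℂ),
        exp (β t * I) * (β' * I),
        (r : ℂ) * (exp (α t * I) * (α' * I)) * (Real.cosh (φ t) : ℂ)
          + (r : ℂ) * exp (α t * I) * ((Real.sinh (φ t) * φ' : ℝ) : ℂ))) t := by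
  have hsinh := ((Real.hasDerivAt_sinh _).comp t hφ).ofReal_comp
  have hcosh := ((Real.hasDerivAt_cosh _).comp t hφ).ofReal_comp
  have hrα := (hasDerivAt_cexp_ofReal_mul_I hα).const_mul (r : ℂ)
  exact ((hrα.mul hsinh).prodMk
    ((hasDerivAt_cexp_ofReal_mul_I hβ).prodMk (hrα.mul hcosh))).const_smul (c : ℂ)

lemma bSph_hopfPoint_deriv (c r : ℝ) (hα : HasDerivAt α α' t) (hβ : HasDerivAt β β' t)
    (hφ : HasDerivAt φ φ' t) :
    bSph (hopfPoint c r (α t) (β t) (φ t)) (deriv (fun s => hopfPoint c r (α s) (β s) (φ s)) t)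
      = ((c ^ 2 * (r ^ 2 * α' + β') : ℝ) : ℂ) * I := by
  rw [(hasDerivAt_hopfPoint c r hα hβ hφ).deriv]
  have hpyth : ((Real.cosh (φ t) : ℝ) : ℂ) ^ 2 - ((Real.sinh (φ t) : ℝ) : ℂ) ^ 2 = 1 := by
    exact_mod_cast Real.cosh_sq_sub_sinh_sq (φ t)
  simp only [bSph, hopfPoint, Prod.smul_fst, Prod.smul_snd, smul_eq_mul, map_mul, conj_ofReal,
    ofReal_mul, ofReal_add, ofReal_pow]
  linear_combination (c : ℂ) ^ 2 * (r : ℂ) ^ 2 * α' * I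
      * (((Real.cosh (φ t) : ℝ) : ℂ) ^ 2 - ((Real.sinh (φ t) : ℝ) : ℂ) ^ 2)
      * conj_exp_ofReal_mul_I_mul_self (α t)
    + (c : ℂ) ^ 2 * (r : ℂ) ^ 2 * α' * I * hpyth
    + (c : ℂ) ^ 2 * β' * I * conj_exp_ofReal_mul_I_mul_self (β t)

end

theorem Lcp_horizontal_general (a : ℝ) :
    ∀ x y : ℝ,
      bSph (Lcp a x y) (deriv (fun t => Lcp a t y) x) = 0 ∧
      bSph (Lcp a x y) (deriv (fun t => Lcp a x t) y) = 0 := by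
  intro x y
  simp only [Lcp_eq_hopfPoint]
  constructor
  · rw [bSph_hopfPoint_deriv _ _ (((hasDerivAt_id' x).sub_const _).div_const _)
      (((hasDerivAt_id' x).const_sub _).div_const _)
      ((((hasDerivAt_id' x).add_const _).const_mul _).div_const _),
      Real.sq_sqrt zero_le_two, ofReal_eq_zero.mpr (by ring), zero_mul]
  · rw [bSph_hopfPoint_deriv _ _ ((((hasDerivAt_id' y).const_mul _).const_sub _).div_const _)
      ((((hasDerivAt_id' y).const_mul _).sub_const _).div_const _)
      (((((hasDerivAt_id' y).const_mul _).const_add _).const_mul _).div_const _),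
      Real.sq_sqrt zero_le_two, ofReal_eq_zero.mpr (by ring), zero_mul]

/-- Theorem 6.1: `L̃` is horizontal with respect to the Hopf fibration
`π : S⁵₂(1) → CP²₁(4)`: each partial derivative is `b`-orthogonal over `ℂ`
to the position vector. -/
theorem Lcp_horizontal (a : ℝ) (ha : a ≠ 0) :
    ∀ x y : ℝ,
      bSph (Lcp a x y) (deriv (fun t => Lcp a t y) x) = 0 ∧
      bSph (Lcp a x y) (deriv (fun t => Lcp a x t) y) = 0 :=
  Lcp_horizontal_general a
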